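/- Let G be a loopless multigraph with finite vertex set V and edges e_1, …, e_m, where each e_i is an unordered pair {u_i, v_i} of distinct vertices (parallel edges allowed). Let G' be the simple graph on the vertex set V ⊎ {w_1, z_1, …, w_m, z_m} (two fresh vertices per edge) whose edges are, for each i ∈ {1,…,m}: {u_i, w_i}, {w_i, z_i} and {z_i, v_i}. Then for every natural number k: G has a cut of size at least k if and only if G' has a cut of size at least 2m + k. -/

import Mathlib

open Finset

/-- The size of the cut determined by `S` in the multigraph with edge family `E`:
the number of edge indices whose edge has exactly one endpoint in `S`. -/
def cutEdges {α : Type*} [DecidableEq α] {ι : Type*} [Fintype ι]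
    (E : ι → α × α) (S : Finset α) : ℕ :=
  (Finset.univ.filter fun i =>
    ((E i).1 ∈ S ∧ (E i).2 ∉ S) ∨ ((E i).1 ∉ S ∧ (E i).2 ∈ S)).card

/-- The edge family of the graph `G'` obtained from the multigraph with edges
`e_i = {u_i, v_i}` by replacing each edge `e_i` by the path
`u_i — w_i — z_i — v_i` with two fresh internal vertices `w_i = (i, false)` and
`z_i = (i, true)`. -/
def subdivEdges {V : Type*} {m : ℕ} (E : Fin m → V × V) :
    Fin m × Fin 3 → (V ⊕ (Fin m × Bool)) × (V ⊕ (Fin m × Bool)) := fun p =>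
  ![((Sum.inl (E p.1).1 : V ⊕ (Fin m × Bool)), Sum.inr (p.1, false)),
    ((Sum.inr (p.1, false) : V ⊕ (Fin m × Bool)), Sum.inr (p.1, true)),
    ((Sum.inr (p.1, true) : V ⊕ (Fin m × Bool)), Sum.inl (E p.1).2)] p.2


/-!
On each subdivided path `u — w — z — v` at most two of the three edges can be cut unless
`u` and `v` lie on different sides, in which case all three can; so any cut of `G'` has size
at most `2m` plus the cut it induces on `V`. Conversely, putting `w` opposite to `u` and `z`
on the side of `u` cuts `u w` and `w z` on every path, and `z v` exactly when `u v` is cut.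
-/

theorem cutEdges_eq_sum_xor {α ι : Type*} [DecidableEq α] [Fintype ι]
    (E : ι → α × α) (S : Finset α) :
    cutEdges E S = ∑ i, (xor (decide ((E i).1 ∈ S)) (decide ((E i).2 ∈ S))).toNat := by
  rw [cutEdges, card_filter]
  refine sum_congr rfl fun i _ => ?_
  by_cases h₁ : (E i).1 ∈ S <;> by_cases h₂ : (E i).2 ∈ S <;> simp [h₁, h₂]

theorem xor_toNat_path_le (a b c d : Bool) :
    (xor a b).toNat + (xor b c).toNat + (xor c d).toNat ≤ 2 + (xor a d).toNat := by
  decide +revert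

section Subdivision

variable {V : Type*} [DecidableEq V] {m : ℕ} (E : Fin m → V × V)

theorem cutEdges_subdivEdges (S' : Finset (V ⊕ (Fin m × Bool))) :
    cutEdges (subdivEdges E) S' = ∑ i,
      ((xor (decide (.inl (E i).1 ∈ S')) (decide (.inr (i, false) ∈ S'))).toNat +
        (xor (decide (.inr (i, false) ∈ S')) (decide (.inr (i, true) ∈ S'))).toNat +
        (xor (decide (.inr (i, true) ∈ S')) (decide (.inl (E i).2 ∈ S'))).toNat) := by
  rw [cutEdges_eq_sum_xor, Fintype.sum_prod_type]
  simp only [Fin.sum_univ_three]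
  rfl

theorem cutEdges_subdivEdges_le (S' : Finset (V ⊕ (Fin m × Bool))) :
    cutEdges (subdivEdges E) S' ≤ 2 * m + cutEdges E S'.toLeft :=
  calc cutEdges (subdivEdges E) S'
      ≤ ∑ i, (2 + (xor (decide (.inl (E i).1 ∈ S')) (decide (.inl (E i).2 ∈ S'))).toNat) := by
        rw [cutEdges_subdivEdges]
        exact sum_le_sum fun i _ => xor_toNat_path_le _ _ _ _
    _ = 2 * m + cutEdges E S'.toLeft := by
        simp [sum_add_distrib, cutEdges_eq_sum_xor, mul_comm]

/-- `w_i = (i, false)` is placed opposite to `u_i`, and `z_i = (i, true)` on the side of `u_i`. -/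
def alternatingLift (S : Finset V) : Finset (V ⊕ (Fin m × Bool)) :=
  S.disjSum (univ.filter fun p => p.2 = decide ((E p.1).1 ∈ S))

theorem cutEdges_subdivEdges_alternatingLift (S : Finset V) :
    cutEdges (subdivEdges E) (alternatingLift E S) = 2 * m + cutEdges E S := by
  rw [cutEdges_subdivEdges, cutEdges_eq_sum_xor]
  simp [alternatingLift, sum_add_distrib, mul_comm]

end Subdivision

theorem gap_multigraph_maxcut_to_gap_maxcut
    {V : Type*} [DecidableEq V] {m : ℕ}
    (E : Fin m → V × V) (k : ℕ) :
    (∃ S : Finset V, k ≤ cutEdges E S) ↔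
    (∃ S' : Finset (V ⊕ (Fin m × Bool)), 2 * m + k ≤ cutEdges (subdivEdges E) S') := by
  constructor
  · rintro ⟨S, hS⟩
    refine ⟨alternatingLift E S, ?_⟩
    rw [cutEdges_subdivEdges_alternatingLift]
    omega
  · rintro ⟨S', hS'⟩
    have := cutEdges_subdivEdges_le E S'
    exact ⟨S'.toLeft, by omega⟩
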